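/- Assume M = m_1+…+m_n is even and μ ∈ ℂ∖ℤ_{>0}. Then for every nonzero v ∈ V[0] there exist a unique sequence (ψ^k)_{k≥0} of vectors of V[0] with ψ^0 = v and a constant ε ∈ ℂ such that for every k ≥ 0: (πi/2)·(μ − 2k)²·ψ^k + (πi/8)·( Σ_{s,t=1}^n Ω_0^{(s,t)} )ψ^k − πi·Σ_{j=1}^k j·( Σ_{s,t=1}^n (Ω_{12}^{(s,t)} + Ω_{21}^{(s,t)}) )ψ^{k−j} = ε·ψ^k; moreover ε = πi·μ²/2. (This system is the coefficientwise form of the eigenvalue equation H_0·ψ = ε·ψ for the KZB operator H_0 = (1/4πi)(∂_{λ1}² + ∂_{λ2}²) + (πi/4)·Σ_{s,t}[ (1/2)Ω_0^{(s,t)} + (1/sin²(πλ))(Ω_{12}^{(s,t)} + Ω_{21}^{(s,t)}) ] applied to ψ = e^{πiμλ}·Σ_{k≥0} Λ^k ψ^k with λ = λ1 − λ2, Λ = e^{−2πiλ}, using ∂_{λ1}² + ∂_{λ2}² = 2∂_λ² on such functions and the expansion 1/sin²(πλ) = −4·Σ_{j≥1} j·Λ^j.) -/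

import Mathlib

/-!
On `V[0]` the total operators `e11` and `e22` both act by zero (their sum vanishes identically
and their difference vanishes on `V[0]`), so the `Ω₀`-term drops out of every equation, while
`Σ_{s,t}(Ω₁₂ + Ω₂₁) = e12 e21 + e21 e12` commutes with `e11 - e22` and hence preserves `V[0]`.
Since `v ≠ 0`, the equation for `k = 0` forces `ε = πiμ²/2`. For `k ≥ 1` the coefficient of
`ψ^k` then becomes `(πi/2)((μ - 2k)² - μ²) = 2πi k (k - μ)`, nonzero because `μ ∉ ℤ_{>0}`, so the
system is triangular and determines `ψ^k` from `ψ^0, …, ψ^{k-1}`.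
-/

open Complex Finset

namespace Paper

noncomputable section

variable {n : ℕ}

/-- The index set of the natural basis of `V = V_{m 0} ⊗ ⋯ ⊗ V_{m (n-1)}`:
the basis vector `v_{i_1} ⊗ ⋯ ⊗ v_{i_n}` corresponds to the index `(i_1,…,i_n)`. -/
abbrev Idx (m : Fin n → ℕ) := ∀ s : Fin n, Fin (m s + 1)

/-- The tensor product `V = V_{m 0} ⊗ ⋯ ⊗ V_{m (n-1)}` realized concretely as the space of
ℂ-valued functions on the index set of its natural basis. -/
abbrev TV (m : Fin n → ℕ) := Idx m → ℂ

/-- The linear operator `f ↦ (i ↦ c i * f (g i))`; all the basic operators below are of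
this form. -/
def mulShift {ι : Type*} (c : ι → ℂ) (g : ι → ι) : Module.End ℂ (ι → ℂ) where
  toFun f i := c i * f (g i)
  map_add' f h := by funext i; simp [mul_add]
  map_smul' a f := by
    funext i
    simp only [Pi.smul_apply, smul_eq_mul, RingHom.id_apply]
    ring

variable (m : Fin n → ℕ)

/-- `e11` acting in the `s`-th tensor factor: `e11 · v_k = ((m-2k)/2) v_k`. -/
def E11 (s : Fin n) : Module.End ℂ (TV m) :=
  mulShift (fun idx => ((m s : ℂ) - 2 * ((idx s : ℕ) : ℂ)) / 2) id

/-- `e22` acting in the `s`-th tensor factor: `e22 · v_k = -((m-2k)/2) v_k`. -/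
def E22 (s : Fin n) : Module.End ℂ (TV m) :=
  mulShift (fun idx => -(((m s : ℂ) - 2 * ((idx s : ℕ) : ℂ)) / 2)) id

/-- `e21` acting in the `s`-th tensor factor: `e21 · v_k = (k+1) v_{k+1}`. -/
def E21 (s : Fin n) : Module.End ℂ (TV m) :=
  mulShift (fun idx => ((idx s : ℕ) : ℂ)) (fun idx => Function.update idx s (idx s - 1))

/-- `e12` acting in the `s`-th tensor factor: `e12 · v_k = (m-k+1) v_{k-1}`. -/
def E12 (s : Fin n) : Module.End ℂ (TV m) :=
  mulShift (fun idx => (m s : ℂ) - ((idx s : ℕ) : ℂ)) (fun idx => Function.update idx s (idx s + 1))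

/-- The diagonal action `e11 = Σ_s e11^{(s)}` on the tensor product. -/
def e11T : Module.End ℂ (TV m) := ∑ s, E11 m s
def e22T : Module.End ℂ (TV m) := ∑ s, E22 m s
def e21T : Module.End ℂ (TV m) := ∑ s, E21 m s
def e12T : Module.End ℂ (TV m) := ∑ s, E12 m s

/-- `v ∈ V[ν]`, i.e. `(e11 - e22) v = ν v`. -/
def inWt (ν : ℤ) (v : TV m) : Prop := (e11T m - e22T m) v = ((ν : ℤ) : ℂ) • v

/-- The Weyl involution `σ`, acting by `σ v_k = (-1)^k v_{m-k}` in each factor. -/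
def sigmaOp : Module.End ℂ (TV m) :=
  mulShift (fun idx => ∏ s, (-1 : ℂ) ^ (m s - (idx s : ℕ))) (fun idx s => (idx s).rev)

/-- The weight of a basis vector: `wt(i) = Σ_s (m_s - 2 i_s)`. -/
def wt (idx : Idx m) : ℤ := ∑ s, ((m s : ℤ) - 2 * ((idx s : ℕ) : ℤ))

/-- The operator `p(κ) = Σ_{k ≥ 0} e21^k e12^k (1/k!) Π_{j=0}^{k-1} (κ + e22 - e11 - j)^{-1}`.
The operator `e22 - e11` is diagonal in the chosen basis with eigenvalue `-wt(idx)` on the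
basis vector labelled by `idx`, so the (partial) inverses `(κ + e22 - e11 - j)^{-1}` are the
diagonal operators with entries `(κ - wt(idx) - j)⁻¹`.  The sum is finite on `V` since
`e12` is nilpotent:  `e12^k = 0` for `k > M = Σ_s m_s`. -/
def pOp (κ : ℂ) : Module.End ℂ (TV m) :=
  ∑ k ∈ Finset.range ((∑ s, m s) + 1),
    (e21T m) ^ k * (e12T m) ^ k *
      mulShift (fun idx => ((k.factorial : ℂ))⁻¹ *
        ∏ j ∈ Finset.range k, (κ - ((wt m idx : ℤ) : ℂ) - (j : ℂ))⁻¹) id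

/-- The operator `𝒜(κ) = σ ∘ p(κ)`. -/
def Aop (κ : ℂ) : Module.End ℂ (TV m) := sigmaOp m * pOp m κ

/-- `Ω₀^{(s,t)} = e11^{(s)} e11^{(t)} + e22^{(s)} e22^{(t)}`. -/
def Om0 (s t : Fin n) : Module.End ℂ (TV m) := E11 m s * E11 m t + E22 m s * E22 m t

/-- `Ω₁₂^{(s,t)} = e12^{(s)} e21^{(t)}`. -/
def Om12 (s t : Fin n) : Module.End ℂ (TV m) := E12 m s * E21 m t

/-- `Ω₂₁^{(s,t)} = e21^{(s)} e12^{(t)}`. -/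
def Om21 (s t : Fin n) : Module.End ℂ (TV m) := E21 m s * E12 m t

/-- The trigonometric r-matrix `r^{(s,t)}(x) = (Ω₊ x + Ω₋)/(x-1)` acting in the `s`-th and
`t`-th tensor factors, where `Ω₊ = ½Ω₀ + Ω₁₂` and `Ω₋ = ½Ω₀ + Ω₂₁`. -/
def rOp (s t : Fin n) (x : ℂ) : Module.End ℂ (TV m) :=
  (x - 1)⁻¹ • (x • ((2 : ℂ)⁻¹ • Om0 m s t + Om12 m s t) + ((2 : ℂ)⁻¹ • Om0 m s t + Om21 m s t))

/-- The trigonometric Gaudin operators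
`K_s(z,μ) = (μ/2)(e11-e22)^{(s)} + Σ_{t ≠ s} r^{(s,t)}(z_s/z_t)`. -/
def Kop (z : Fin n → ℂ) (μ : ℂ) (s : Fin n) : Module.End ℂ (TV m) :=
  (μ / 2) • (E11 m s - E22 m s) + ∑ t ∈ Finset.univ.erase s, rOp m s t (z s / z t)

/-- The matrix entry `M₁₁(x) = 2πi Σ_s (1-x/z_s)⁻¹ e11^{(s)} - πi e11`. -/
def M11 (z : Fin n → ℂ) (x : ℂ) : Module.End ℂ (TV m) :=
  (2 * (Real.pi : ℂ) * I) • (∑ s, (1 - x / z s)⁻¹ • E11 m s) - ((Real.pi : ℂ) * I) • e11T m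

/-- `M₁₂(x) = 2πi Σ_s (1-x/z_s)⁻¹ e21^{(s)} - 2πi e21`. -/
def M12 (z : Fin n → ℂ) (x : ℂ) : Module.End ℂ (TV m) :=
  (2 * (Real.pi : ℂ) * I) • (∑ s, (1 - x / z s)⁻¹ • E21 m s) -
    (2 * (Real.pi : ℂ) * I) • e21T m

/-- `M₂₁(x) = 2πi Σ_s (1-x/z_s)⁻¹ e12^{(s)}`. -/
def M21 (z : Fin n → ℂ) (x : ℂ) : Module.End ℂ (TV m) :=
  (2 * (Real.pi : ℂ) * I) • (∑ s, (1 - x / z s)⁻¹ • E12 m s)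

/-- `M₂₂(x) = 2πi Σ_s (1-x/z_s)⁻¹ e22^{(s)} - πi e22`. -/
def M22 (z : Fin n → ℂ) (x : ℂ) : Module.End ℂ (TV m) :=
  (2 * (Real.pi : ℂ) * I) • (∑ s, (1 - x / z s)⁻¹ • E22 m s) - ((Real.pi : ℂ) * I) • e22T m

/-- The derivative `(dM₂₂/dx)(x) = 2πi Σ_s z_s⁻¹ (1-x/z_s)⁻² e22^{(s)}`. -/
def M22d (z : Fin n → ℂ) (x : ℂ) : Module.End ℂ (TV m) :=
  (2 * (Real.pi : ℂ) * I) • (∑ s, ((z s)⁻¹ * ((1 - x / z s)⁻¹) ^ 2) • E22 m s)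

/-- The coefficient `D₂(x)` of the universal differential operator
`𝒟 = cdet [[∂_u - πiμ + M₁₁, M₁₂],[M₂₁, ∂_u + πiμ + M₂₂]] = ∂_u² + D₁(x) ∂_u + D₂(x)`
(where `x = e^{-2πiu}`, `∂_u = -2πi x ∂_x`), namely
`D₂(x) = (-πiμ + M₁₁(x)) ∘ (πiμ + M₂₂(x)) - 2πi x (dM₂₂/dx)(x) - M₂₁(x) ∘ M₁₂(x)`. -/
def D2 (z : Fin n → ℂ) (μ : ℂ) (x : ℂ) : Module.End ℂ (TV m) :=
  (-(((Real.pi : ℂ) * I * μ)) • (1 : Module.End ℂ (TV m)) + M11 m z x) *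
      ((((Real.pi : ℂ) * I * μ)) • (1 : Module.End ℂ (TV m)) + M22 m z x)
    - (2 * (Real.pi : ℂ) * I * x) • M22d m z x
    - M21 m z x * M12 m z x

/-- The Bethe ansatz equations for the triple `(z; μ; V[ν])`, `ν = M - 2m'`:  `t` is a tuple
of pairwise distinct complex numbers, each nonzero and distinct from every `z_s`, with
`(1 - μ + ν/2)/t_i + Σ_{j≠i} 2/(t_i - t_j) - Σ_s m_s/(t_i - z_s) = 0` for all `i`. -/
def BAE (z : Fin n → ℂ) (μ : ℂ) {m' : ℕ} (t : Fin m' → ℂ) : Prop :=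
  Function.Injective t ∧ (∀ i, t i ≠ 0) ∧ (∀ i s, t i ≠ z s) ∧
    ∀ i, (1 - μ + ((∑ s, (m s : ℂ)) - 2 * (m' : ℂ)) / 2) / t i
        + (∑ j ∈ Finset.univ.erase i, 2 / (t i - t j))
        - ∑ s, (m s : ℂ) / (t i - z s) = 0

/-- The partial sum `ℓ_1 + ⋯ + ℓ_{s-1}` (0-based). -/
def pref (ℓv : Idx m) (s : Fin n) : ℕ :=
  ∑ u ∈ Finset.univ.filter (fun u => u < s), (ℓv u : ℕ)

/-- Extension of a tuple `t : Fin m' → ℂ` to a function on `ℕ` (by zero). -/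
def extt {m' : ℕ} (t : Fin m' → ℂ) : ℕ → ℂ := fun i => if h : i < m' then t ⟨i, h⟩ else 0

/-- The coordinate `ω_ℓ(t,z) = Σ_{ρ ∈ S_{m'}} Π_{s=1}^n Π_{i=ℓ_1+⋯+ℓ_{s-1}+1}^{ℓ_1+⋯+ℓ_s}
(t_{ρ(i)} - z_s)⁻¹` of the weight function. -/
def omegaCoeff (z : Fin n → ℂ) {m' : ℕ} (t : Fin m' → ℂ) (ℓv : Idx m) : ℂ :=
  ∑ ρ : Equiv.Perm (Fin m'), ∏ s : Fin n,
    ∏ i ∈ Finset.Ico (pref m ℓv s) (pref m ℓv s + (ℓv s : ℕ)), (extt (t ∘ ρ) i - z s)⁻¹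

/-- The Bethe vector (weight function) `ω(t,z) = Σ_{ℓ ∈ C} ω_ℓ(t,z) v_ℓ ∈ V[M - 2m']`. -/
def betheVec (z : Fin n → ℂ) {m' : ℕ} (t : Fin m' → ℂ) : TV m :=
  fun ℓv => if (∑ s, ((ℓv s : ℕ))) = m' then omegaCoeff m z t ℓv else 0

/-- The eigenvalue `k_s(t,z,μ) = (m_s/2)[(μ - ν/2 + m_s/2) + Σ_{p≠s} m_p z_s/(z_s-z_p)
+ 2 Σ_i z_s/(t_i - z_s)]`, with `ν = M - 2m'`. -/
def kEig (z : Fin n → ℂ) (μ : ℂ) {m' : ℕ} (t : Fin m' → ℂ) (s : Fin n) : ℂ :=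
  ((m s : ℂ) / 2) * ((μ - ((∑ u, (m u : ℂ)) - 2 * (m' : ℂ)) / 2 + (m s : ℂ) / 2)
    + (∑ p ∈ Finset.univ.erase s, (m p : ℂ) * z s / (z s - z p))
    + 2 * ∑ i, z s / (t i - z s))

/-- The scalar eigenvalue function `E₂(x, t, z, μ)` of `D₂(x)` on the Bethe vector, i.e.
the coefficient of the fundamental differential operator `ℰ = ∂_u² + E₂(x)`. -/
def E2fun (z : Fin n → ℂ) (μ : ℂ) {m' : ℕ} (t : Fin m' → ℂ) (x : ℂ) : ℂ :=
  (2 * (Real.pi : ℂ) * I) ^ 2 *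
    (-(μ + ((∑ u, (m u : ℂ)) - 2 * (m' : ℂ)) / 2) ^ 2 / 4
      + ∑ s, (((m s : ℂ) * ((m s : ℂ) + 2) / 4 + kEig m z μ t s) / (1 - x / z s)
          - ((m s : ℂ) * ((m s : ℂ) + 2) / 4) / (1 - x / z s) ^ 2))



/-- `Σ_{s,t=1}^n Ω₀^{(s,t)}` (for `s = t` both operators compose in the `s`-th factor). -/
noncomputable def OmSum0 (n : ℕ) (m : Fin n → ℕ) : Module.End ℂ (TV m) :=
  ∑ s, ∑ t, Om0 m s t

/-- `Σ_{s,t=1}^n (Ω₁₂^{(s,t)} + Ω₂₁^{(s,t)})`. -/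
noncomputable def OmSum1221 (n : ℕ) (m : Fin n → ℕ) : Module.End ℂ (TV m) :=
  ∑ s, ∑ t, (Om12 m s t + Om21 m s t)

/-- The coefficientwise form of the eigenvalue equation `H₀ ψ = ε ψ` for the trigonometric
KZB operator `H₀` applied to `ψ = e^{πiμλ} Σ_{k≥0} Λ^k ψ^k` (`λ = λ₁-λ₂`, `Λ = e^{-2πiλ}`),
using `∂_{λ₁}² + ∂_{λ₂}² = 2∂_λ²` on such functions and `1/sin²(πλ) = -4Σ_{j≥1} jΛ^j`:
for all `k ≥ 0`,
`(πi/2)(μ-2k)² ψ^k + (πi/8)(Σ_{s,t} Ω₀^{(s,t)}) ψ^k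
 - πi Σ_{j=1}^k j (Σ_{s,t}(Ω₁₂^{(s,t)} + Ω₂₁^{(s,t)})) ψ^{k-j} = ε ψ^k`. -/
def EigSystem (n : ℕ) (m : Fin n → ℕ) (μ : ℂ) (v : TV m) (ψ : ℕ → TV m) (ε : ℂ) : Prop :=
  (∀ k, inWt m 0 (ψ k)) ∧ ψ 0 = v ∧
    ∀ k : ℕ,
      (((Real.pi : ℂ) * Complex.I / 2) * (μ - 2 * (k : ℂ)) ^ 2) • ψ k
        + ((Real.pi : ℂ) * Complex.I / 8) • OmSum0 n m (ψ k)
        - ((Real.pi : ℂ) * Complex.I) •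
            ∑ j ∈ Finset.Icc 1 k, (j : ℂ) • OmSum1221 n m (ψ (k - j))
      = ε • ψ k

section Ladder

variable {R A : Type*} [CommRing R] [Ring A] [Algebra R A]

theorem commute_mul_of_ladder {h e f : A} (c : R) (he : h * e = e * h + c • e)
    (hf : h * f = f * h - c • f) : Commute h (e * f) := by
  change h * (e * f) = e * f * h
  rw [← mul_assoc, he, add_mul, mul_assoc, hf, mul_sub, smul_mul_assoc, mul_smul_comm,
    mul_assoc, sub_add_cancel]

theorem commute_mul_add_mul_of_ladder {h e f : A} (c : R) (he : h * e = e * h + c • e)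
    (hf : h * f = f * h - c • f) : Commute h (e * f + f * e) := by
  refine (commute_mul_of_ladder c he hf).add_right (commute_mul_of_ladder (-c) ?_ ?_)
  · rwa [neg_smul, ← sub_eq_add_neg]
  · rwa [neg_smul, sub_neg_eq_add]

end Ladder

theorem mem_ker_of_commute {R M : Type*} [CommRing R] [AddCommGroup M] [Module R M]
    {h T : Module.End R M} (hT : Commute h T) {v : M} (hv : v ∈ LinearMap.ker h) :
    T v ∈ LinearMap.ker h := by
  rw [LinearMap.mem_ker] at hv ⊢
  rw [← Module.End.mul_apply, hT.eq, Module.End.mul_apply, hv, map_zero]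

theorem sum_Icc_one_eq_sum_range {M : Type*} [AddCommMonoid M] (f : ℕ → M) (k : ℕ) :
    ∑ j ∈ Icc 1 k, f j = ∑ j ∈ range k, f (j + 1) := by
  rw [range_eq_Ico, sum_Ico_add' f 0 k 1, ← Ico_add_one_right_eq_Icc]

section Triangular

variable {K W : Type*} [Field K] [AddCommGroup W] [Module K W]

def triangularSol (a : ℕ → K) (T : Module.End K W) (v : W) : ℕ → W
  | 0 => v
  | k + 1 => (a (k + 1))⁻¹ •
      ∑ j ∈ range (k + 1), ((j : K) + 1) • T (triangularSol a T v (k - j))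

variable (a : ℕ → K) (T : Module.End K W) (v : W)

theorem triangularSol_zero : triangularSol a T v 0 = v := by
  rw [triangularSol]

theorem sum_Icc_triangular (ψ : ℕ → W) (k : ℕ) :
    ∑ j ∈ Icc 1 (k + 1), (j : K) • T (ψ (k + 1 - j)) =
      ∑ j ∈ range (k + 1), ((j : K) + 1) • T (ψ (k - j)) := by
  rw [sum_Icc_one_eq_sum_range]
  push_cast
  rfl

theorem triangularSol_succ {k : ℕ} (ha : a (k + 1) ≠ 0) :
    a (k + 1) • triangularSol a T v (k + 1) =
      ∑ j ∈ Icc 1 (k + 1), (j : K) • T (triangularSol a T v (k + 1 - j)) := by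
  rw [sum_Icc_triangular, triangularSol, smul_inv_smul₀ ha]

theorem triangularSol_mem (P : Submodule K W) (hT : ∀ w ∈ P, T w ∈ P) (hv : v ∈ P) :
    ∀ k, triangularSol a T v k ∈ P
  | 0 => by rwa [triangularSol_zero]
  | k + 1 => by
    rw [triangularSol]
    exact P.smul_mem _ <| P.sum_mem fun j _ =>
      P.smul_mem _ <| hT _ (triangularSol_mem P hT hv (k - j))

theorem eq_triangularSol (ha : ∀ k, a (k + 1) ≠ 0) {ψ : ℕ → W} (h0 : ψ 0 = v)
    (hψ : ∀ k, a k • ψ k = ∑ j ∈ Icc 1 k, (j : K) • T (ψ (k - j))) :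
    ψ = triangularSol a T v := by
  funext k
  induction k using Nat.strong_induction_on with
  | _ k ih =>
    rcases k with _ | k
    · rw [h0, triangularSol_zero]
    · rw [← smul_right_inj (ha k), hψ, triangularSol_succ a T v (ha k)]
      refine sum_congr rfl fun j hj => ?_
      rw [ih (k + 1 - j) (by grind)]

end Triangular

section Operators

theorem mulShift_apply {ι : Type*} (c : ι → ℂ) (g : ι → ι) (f : ι → ℂ) (i : ι) :
    mulShift c g f i = c i * f (g i) := rfl

theorem wt_cast (idx : Idx m) :
    ((wt m idx : ℤ) : ℂ) = ∑ s, ((m s : ℂ) - 2 * ((idx s : ℕ) : ℂ)) := by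
  push_cast [wt]
  rfl

theorem wt_update (idx : Idx m) (s : Fin n) (b : Fin (m s + 1)) :
    wt m (Function.update idx s b) = wt m idx + 2 * ((idx s : ℕ) : ℤ) - 2 * ((b : ℕ) : ℤ) := by
  simp only [wt, ← add_sum_erase _ _ (mem_univ s), Function.update_self]
  rw [sum_congr rfl fun u hu => by rw [Function.update_of_ne (ne_of_mem_erase hu)]]
  ring

theorem e11T_sub_e22T : e11T m - e22T m = mulShift (fun idx => ((wt m idx : ℤ) : ℂ)) id := by
  refine LinearMap.ext fun f => funext fun idx => ?_
  simp only [LinearMap.sub_apply, Pi.sub_apply, e11T, e22T, LinearMap.sum_apply, Finset.sum_apply,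
    E11, E22, mulShift_apply, wt_cast, sum_mul, ← sum_sub_distrib]
  exact sum_congr rfl fun s _ => by ring

theorem e11T_sub_e22T_mul_E12 (s : Fin n) :
    (e11T m - e22T m) * E12 m s = E12 m s * (e11T m - e22T m) + (2 : ℂ) • E12 m s := by
  rw [e11T_sub_e22T]
  refine LinearMap.ext fun f => funext fun idx => ?_
  simp only [Module.End.mul_apply, LinearMap.add_apply, LinearMap.smul_apply, E12,
    mulShift_apply, Pi.add_apply, Pi.smul_apply, smul_eq_mul, id]
  by_cases hc : (idx s : ℕ) = m s
  · simp [hc]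
  · have hlt : idx s < Fin.last (m s) := Fin.lt_def.mpr (by grind)
    rw [wt_update, Fin.val_add_one_of_lt hlt]
    push_cast
    ring

theorem e11T_sub_e22T_mul_E21 (s : Fin n) :
    (e11T m - e22T m) * E21 m s = E21 m s * (e11T m - e22T m) - (2 : ℂ) • E21 m s := by
  rw [e11T_sub_e22T]
  refine LinearMap.ext fun f => funext fun idx => ?_
  simp only [Module.End.mul_apply, LinearMap.sub_apply, LinearMap.smul_apply, E21,
    mulShift_apply, Pi.sub_apply, Pi.smul_apply, smul_eq_mul, id]
  by_cases hc : idx s = 0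
  · simp [hc]
  · rw [wt_update, Fin.coe_sub_one, if_neg hc]
    push_cast [Nat.one_le_iff_ne_zero.mpr (Fin.val_ne_zero_iff.mpr hc)]
    ring

theorem e11T_add_e22T : e11T m + e22T m = 0 := by
  refine LinearMap.ext fun f => funext fun idx => ?_
  simp only [e11T, e22T, LinearMap.add_apply, LinearMap.sum_apply, Pi.add_apply,
    Finset.sum_apply, E11, E22, mulShift_apply, ← sum_add_distrib, LinearMap.zero_apply,
    Pi.zero_apply]
  exact sum_eq_zero fun s _ => by ring

theorem OmSum0_eq : OmSum0 n m = e11T m * e11T m + e22T m * e22T m := by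
  simp only [OmSum0, Om0, sum_add_distrib, e11T, e22T, sum_mul_sum]

theorem OmSum1221_eq : OmSum1221 n m = e12T m * e21T m + e21T m * e12T m := by
  simp only [OmSum1221, Om12, Om21, sum_add_distrib, e12T, e21T, sum_mul_sum]

theorem inWt_zero_iff (v : TV m) : inWt m 0 v ↔ v ∈ LinearMap.ker (e11T m - e22T m) := by
  simp [inWt]

theorem OmSum0_apply_of_inWt_zero {v : TV m} (hv : inWt m 0 v) : OmSum0 n m v = 0 := by
  rw [inWt_zero_iff, LinearMap.mem_ker, LinearMap.sub_apply, sub_eq_zero] at hv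
  have hsum := LinearMap.congr_fun (e11T_add_e22T m) v
  rw [LinearMap.add_apply, LinearMap.zero_apply, ← hv, ← two_smul ℂ, smul_eq_zero] at hsum
  have h11 : e11T m v = 0 := hsum.resolve_left two_ne_zero
  simp [OmSum0_eq, h11, ← hv]

theorem commute_OmSum1221 : Commute (e11T m - e22T m) (OmSum1221 n m) := by
  rw [OmSum1221_eq]
  refine commute_mul_add_mul_of_ladder (2 : ℂ) ?_ ?_
  · simp only [e12T, mul_sum, sum_mul, smul_sum, ← sum_add_distrib, e11T_sub_e22T_mul_E12]
  · simp only [e21T, mul_sum, sum_mul, smul_sum, ← sum_sub_distrib, e11T_sub_e22T_mul_E21]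

end Operators

section Eigenproblem

open Real

variable {μ : ℂ}

def eigGap (μ : ℂ) (k : ℕ) : ℂ := π * I / 2 * (μ - 2 * k) ^ 2 - π * I * μ ^ 2 / 2

theorem eigGap_succ_ne_zero (hμ : ∀ k : ℕ, 0 < k → μ ≠ (k : ℂ)) (k : ℕ) :
    eigGap μ (k + 1) ≠ 0 := by
  have hfactor : eigGap μ (k + 1) = 2 * π * I * ((k + 1 : ℕ) : ℂ) * ((k + 1 : ℕ) - μ) := by
    simp only [eigGap]
    push_cast
    ring
  rw [hfactor]
  exact mul_ne_zero (by simp [pi_ne_zero, Nat.cast_add_one_ne_zero])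
    (sub_ne_zero.mpr (hμ (k + 1) k.succ_pos).symm)

theorem eigSystem_iff {ε : ℂ} {v : TV m} {ψ : ℕ → TV m} (hψ : ∀ k, inWt m 0 (ψ k)) :
    EigSystem n m μ v ψ ε ↔ ψ 0 = v ∧ ∀ k : ℕ,
      (π * I / 2 * (μ - 2 * k) ^ 2 - ε) • ψ k =
        ∑ j ∈ Icc 1 k, (j : ℂ) • ((π * I) • OmSum1221 n m) (ψ (k - j)) := by
  simp only [EigSystem, hψ, OmSum0_apply_of_inWt_zero, implies_true, true_and, smul_zero,
    add_zero, sub_smul, LinearMap.smul_apply, smul_comm _ ((π : ℂ) * I), ← smul_sum,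
    sub_eq_iff_comm]

theorem EigSystem.eigenvalue_eq {ε : ℂ} {v : TV m} {ψ : ℕ → TV m} (hv0 : v ≠ 0)
    (h : EigSystem n m μ v ψ ε) : ε = π * I * μ ^ 2 / 2 := by
  obtain ⟨hψ0, hψ⟩ := (eigSystem_iff m h.1).mp h
  have h0 := hψ 0
  rw [Icc_eq_empty (by omega), sum_empty, hψ0, smul_eq_zero] at h0
  have hgap := sub_eq_zero.mp (h0.resolve_right hv0)
  rw [← hgap, Nat.cast_zero, mul_zero, sub_zero]
  ring

theorem eigSystem_iff_eq_triangularSol (hμ : ∀ k : ℕ, 0 < k → μ ≠ (k : ℂ)) {v : TV m}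
    (hv : inWt m 0 v) (ψ : ℕ → TV m) :
    EigSystem n m μ v ψ (π * I * μ ^ 2 / 2) ↔
      ψ = triangularSol (eigGap μ) ((π * I) • OmSum1221 n m) v := by
  have hgap := eigGap_succ_ne_zero hμ
  constructor
  · intro h
    obtain ⟨hψ0, hψ⟩ := (eigSystem_iff m h.1).mp h
    exact eq_triangularSol _ _ _ hgap hψ0 hψ
  · rintro rfl
    have hmem := triangularSol_mem (eigGap μ) ((π * I) • OmSum1221 n m) v
      (LinearMap.ker (e11T m - e22T m))
      (fun _ => mem_ker_of_commute ((commute_OmSum1221 m).smul_right _)) ((inWt_zero_iff m v).mp hv)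
    refine (eigSystem_iff m fun k => (inWt_zero_iff m _).mpr (hmem k)).mpr
      ⟨triangularSol_zero _ _ _, fun k => ?_⟩
    rcases k with _ | k
    · rw [Icc_eq_empty (by omega), sum_empty, smul_eq_zero, Nat.cast_zero, mul_zero, sub_zero]
      exact Or.inl (by ring)
    · exact triangularSol_succ _ _ _ (hgap k)

end Eigenproblem

theorem statement17_general
    (n : ℕ) (m : Fin n → ℕ)
    (μ : ℂ) (hμ : ∀ k : ℕ, 0 < k → μ ≠ (k : ℂ))
    (v : TV m) (hv : inWt m 0 v) (hv0 : v ≠ 0) :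
    (∃! p : (ℕ → TV m) × ℂ, EigSystem n m μ v p.1 p.2) ∧
    (∀ ψ : ℕ → TV m, ∀ ε : ℂ, EigSystem n m μ v ψ ε →
      ε = (Real.pi : ℂ) * Complex.I * μ ^ 2 / 2) := by
  have heigenvalue (ψ : ℕ → TV m) (ε : ℂ) (h : EigSystem n m μ v ψ ε) :
      ε = (Real.pi : ℂ) * Complex.I * μ ^ 2 / 2 :=
    h.eigenvalue_eq m hv0
  refine ⟨⟨(_, _), (eigSystem_iff_eq_triangularSol m hμ hv _).mpr rfl, ?_⟩, heigenvalue⟩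
  rintro ⟨ψ, ε⟩ h
  obtain rfl := heigenvalue ψ ε h
  rw [(eigSystem_iff_eq_triangularSol m hμ hv ψ).mp h]

/-- Theorem 3.2 of the paper, after [FV2].  Assume `M` is even and
`μ ∉ ℤ_{>0}`.  Then for every nonzero `v ∈ V[0]` there exist a unique sequence
`(ψ^k)_{k≥0}` in `V[0]` with `ψ^0 = v` and a unique constant `ε` satisfying the
coefficientwise eigenvalue system; moreover `ε = πiμ²/2`. -/
theorem statement17
    (n : ℕ) (hn : 1 < n) (m : Fin n → ℕ) (hm : ∀ s, 0 < m s)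
    (M : ℕ) (hM : M = ∑ s, m s) (hMeven : Even M)
    (μ : ℂ) (hμ : ∀ k : ℕ, 0 < k → μ ≠ (k : ℂ))
    (v : TV m) (hv : inWt m 0 v) (hv0 : v ≠ 0) :
    (∃! p : (ℕ → TV m) × ℂ, EigSystem n m μ v p.1 p.2) ∧
    (∀ ψ : ℕ → TV m, ∀ ε : ℂ, EigSystem n m μ v ψ ε →
      ε = (Real.pi : ℂ) * Complex.I * μ ^ 2 / 2) :=
  statement17_general n m μ hμ v hv hv0

end
end Paper
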